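/- arXiv:2603.28423 — 3 statements merged into one kernel-verified Lean document; each statement's English description precedes it below -/
import Mathlib

section
/- Let A, B, C be pairwise disjoint subsets of V. If for every x ∈ 𝒳 the random vectors Y_A and Y_B are conditionally independent given Y_C under the conditional measure μ_x = μ(· | X = x), then under μ the random vectors Y_A and Y_B are conditionally independent given the pair (Y_C, X) (i.e., given the σ-algebra generated jointly by Y_C and X). -/
/-! Since `X` takes finitely many values, conditioning on `(Y_C, X)` amounts to conditioning on
`Y_C` separately on each fiber `{X = x}`: there `μ[f | Y_C, X] = μ_x[f | Y_C]` holds `μ`-a.e.,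
which follows from the law of total probability `μ = ∑ₓ μ(X = x) • μ_x`. The fiberwise product
formulas for the conditional probabilities of `{Y_A ∈ s} ∩ {Y_B ∈ t}` therefore glue together
into the product formula under `μ`. -/

open MeasureTheory ProbabilityTheory

instance cond_isFiniteMeasure {Ω : Type*} [MeasurableSpace Ω] (μ : Measure Ω) (s : Set Ω) :
    IsFiniteMeasure (μ[|s]) := by
  constructor
  unfold ProbabilityTheory.cond
  simp only [Measure.smul_apply, smul_eq_mul, Measure.restrict_apply_univ]
  exact lt_of_le_of_lt (ENNReal.inv_mul_le_one _) ENNReal.one_lt_top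

/-- The map `ω ↦ (Y a ω)_{a ∈ S}`, i.e. the random vector `Y_S`. -/
def restr {Ω : Type*} {V : Type*} {E : V → Type*} (Y : ∀ a, Ω → E a) (S : Set V) :
    Ω → ∀ a : S, E a := fun ω a => Y a ω

lemma measurable_restr {Ω : Type*} [MeasurableSpace Ω] {V : Type*} {E : V → Type*}
    [∀ a, MeasurableSpace (E a)] {Y : ∀ a, Ω → E a} (hY : ∀ a, Measurable (Y a)) (S : Set V) :
    Measurable (restr Y S) :=
  measurable_pi_lambda _ fun a => hY a

theorem MeasureTheory.Integrable.cond {Ω E : Type*} {mΩ : MeasurableSpace Ω} {μ : Measure Ω}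
    [NormedAddCommGroup E] {f : Ω → E} (hf : Integrable f μ) (s : Set Ω) :
    Integrable f μ[|s] := by
  by_cases hs : μ s = 0
  · simp [cond_eq_zero_of_meas_eq_zero hs]
  · exact hf.restrict.smul_measure (ENNReal.inv_ne_top.2 hs)

theorem measurable_comp_of_countable {Ω 𝒳 β : Type*} {mΩ : MeasurableSpace Ω} [Countable 𝒳]
    [MeasurableSpace 𝒳] [MeasurableSingletonClass 𝒳] [MeasurableSpace β] {X : Ω → 𝒳}
    {F : 𝒳 → Ω → β} (hF : ∀ x, Measurable (F x)) (hX : Measurable X) :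
    Measurable fun ω => F (X ω) ω :=
  (measurable_from_prod_countable_left (f := fun p : Ω × 𝒳 => F p.2 p.1) hF).comp
    (measurable_id.prodMk hX)

section CondFiber

variable {Ω 𝒳 : Type*} {mΩ : MeasurableSpace Ω} {μ : Measure Ω} [IsFiniteMeasure μ]
  [Fintype 𝒳] [MeasurableSpace 𝒳] [MeasurableSingletonClass 𝒳] {X : Ω → 𝒳}

theorem ae_of_forall_ae_cond_fiber (hX : Measurable X) {p : 𝒳 → Ω → Prop}
    (h : ∀ x, ∀ᵐ ω ∂μ[|X ⁻¹' {x}], p x ω) : ∀ᵐ ω ∂μ, p (X ω) ω := by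
  rw [← sum_meas_smul_cond_fiber hX μ, ae_finsetSum_measure_iff]
  intro x _
  refine Measure.ae_smul_measure ?_ _
  filter_upwards [h x, ae_cond_mem (hX (.singleton x))] with ω hp hω
  rwa [show X ω = x from hω]

theorem integrable_of_forall_integrable_cond_fiber {E : Type*} [NormedAddCommGroup E]
    (hX : Measurable X) {φ : Ω → E} (h : ∀ x, Integrable φ μ[|X ⁻¹' {x}]) : Integrable φ μ := by
  rw [← sum_meas_smul_cond_fiber hX μ, integrable_finsetSum_measure]
  exact fun x _ => (h x).smul_measure (measure_ne_top _ _)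

theorem setIntegral_eq_sum_smul_setIntegral_cond_fiber {E : Type*} [NormedAddCommGroup E]
    [NormedSpace ℝ E] (hX : Measurable X) {S : Set Ω} (hS : MeasurableSet S) {φ : Ω → E}
    (hφ : Integrable φ μ) :
    ∫ ω in S, φ ω ∂μ = ∑ x, μ.real (X ⁻¹' {x}) • ∫ ω in S, φ ω ∂μ[|X ⁻¹' {x}] := by
  have hφS := hφ.indicator hS
  rw [← sum_meas_smul_cond_fiber hX μ, integrable_finsetSum_measure] at hφS
  rw [← integral_indicator hS]
  conv_lhs => rw [← sum_meas_smul_cond_fiber hX μ]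
  rw [integral_finsetSum_measure hφS]
  simp only [integral_smul_measure]
  simp only [integral_indicator hS, Measure.real]

theorem condExp_comap_prodMk_ae_eq_condExp_cond_fiber {γ : Type*} [MeasurableSpace γ]
    {Z : Ω → γ} (hZ : Measurable Z) (hX : Measurable X) {f : Ω → ℝ}
    (hf : Integrable f μ) :
    μ[f | MeasurableSpace.comap (fun ω => (Z ω, X ω)) inferInstance]
      =ᵐ[μ] fun ω => (μ[|X ⁻¹' {X ω}])[f | MeasurableSpace.comap Z inferInstance] ω := by
  set mZX : MeasurableSpace Ω := MeasurableSpace.comap (fun ω => (Z ω, X ω)) inferInstance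
  set mZ : MeasurableSpace Ω := MeasurableSpace.comap Z inferInstance
  set F : 𝒳 → Ω → ℝ := fun x => (μ[|X ⁻¹' {x}])[f | mZ]
  have hZX_le : mZX ≤ mΩ := (hZ.prodMk hX).comap_le
  have hZ_le : mZ ≤ mΩ := hZ.comap_le
  have hZ_le_ZX : mZ ≤ mZX :=
    (measurable_fst.comp (comap_measurable (fun ω => (Z ω, X ω)))).comap_le
  have hF_fiber : ∀ x, (fun ω => F (X ω) ω) =ᵐ[μ[|X ⁻¹' {x}]] F x := fun x => by
    filter_upwards [ae_cond_mem (hX (.singleton x))] with ω hω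
    rw [show X ω = x from hω]
  have hF_meas : StronglyMeasurable[mZX] fun ω => F (X ω) ω := by
    have hF_x (x : 𝒳) : StronglyMeasurable[mZX] (F x) := stronglyMeasurable_condExp.mono hZ_le_ZX
    exact (measurable_comp_of_countable (fun x => (hF_x x).measurable)
      (measurable_snd.comp (comap_measurable _))).stronglyMeasurable
  have hF_int : Integrable (fun ω => F (X ω) ω) μ :=
    integrable_of_forall_integrable_cond_fiber hX fun x =>
      integrable_condExp.congr (hF_fiber x).symm
  refine (ae_eq_condExp_of_forall_setIntegral_eq hZX_le hf (fun _ _ _ => hF_int.integrableOn)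
    ?_ hF_meas.aestronglyMeasurable).symm
  rintro _ ⟨T, hT, rfl⟩ -
  rw [setIntegral_eq_sum_smul_setIntegral_cond_fiber hX (hZX_le _ ⟨T, hT, rfl⟩) hF_int,
    setIntegral_eq_sum_smul_setIntegral_cond_fiber hX (hZX_le _ ⟨T, hT, rfl⟩) hf]
  refine Finset.sum_congr rfl fun x _ => congrArg _ ?_
  have hslice : (fun ω => (Z ω, X ω)) ⁻¹' T =ᵐ[μ[|X ⁻¹' {x}]] Z ⁻¹' ((·, x) ⁻¹' T) := by
    filter_upwards [ae_cond_mem (hX (.singleton x))] with ω hω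
    change ((Z ω, X ω) ∈ T) = ((Z ω, x) ∈ T)
    rw [show X ω = x from hω]
  calc ∫ ω in (fun ω => (Z ω, X ω)) ⁻¹' T, F (X ω) ω ∂μ[|X ⁻¹' {x}]
      = ∫ ω in Z ⁻¹' ((·, x) ⁻¹' T), F x ω ∂μ[|X ⁻¹' {x}] := by
        rw [setIntegral_congr_set hslice]
        exact integral_congr_ae (ae_restrict_of_ae (hF_fiber x))
    _ = ∫ ω in Z ⁻¹' ((·, x) ⁻¹' T), f ω ∂μ[|X ⁻¹' {x}] :=
        setIntegral_condExp hZ_le (hf.cond _) ⟨_, measurable_prodMk_right hT, rfl⟩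
    _ = ∫ ω in (fun ω => (Z ω, X ω)) ⁻¹' T, f ω ∂μ[|X ⁻¹' {x}] := setIntegral_congr_set hslice.symm

end CondFiber

theorem profile_condIndep_implies_condIndep_given_YC_X_general
    {Ω : Type*} [MeasurableSpace Ω] [StandardBorelSpace Ω]
    {V : Type*}
    {𝒳 : Type*} [Fintype 𝒳] [MeasurableSpace 𝒳] [MeasurableSingletonClass 𝒳]
    {E : V → Type*} [∀ a, MeasurableSpace (E a)]
    (Y : ∀ a, Ω → E a) (hY : ∀ a, Measurable (Y a))
    (X : Ω → 𝒳) (hX : Measurable X)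
    (μ : Measure Ω) [IsProbabilityMeasure μ]
    (A B C : Set V)
    (h : ∀ x : 𝒳,
      CondIndepFun (MeasurableSpace.comap (restr Y C) MeasurableSpace.pi)
        ((measurable_restr hY C).comap_le) (restr Y A) (restr Y B) (μ[|X ⁻¹' {x}])) :
    CondIndepFun
      (MeasurableSpace.comap (fun ω => (restr Y C ω, X ω)) inferInstance)
      (((measurable_restr hY C).prodMk hX).comap_le)
      (restr Y A) (restr Y B) μ := by
  have hYA := measurable_restr hY A
  have hYB := measurable_restr hY B
  have hYC := measurable_restr hY C
  rw [condIndepFun_iff_condExp_inter_preimage_eq_mul hYA hYB]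
  intro s t hs ht
  have h_fiber x := (condIndepFun_iff_condExp_inter_preimage_eq_mul hYA hYB).1 (h x) s t hs ht
  have h_ind {D : Set Ω} (hD : MeasurableSet D) :=
    condExp_comap_prodMk_ae_eq_condExp_cond_fiber hYC hX
      ((integrable_const (μ := μ) (1 : ℝ)).indicator hD)
  filter_upwards [h_ind ((hYA hs).inter (hYB ht)), h_ind (hYA hs), h_ind (hYB ht),
    ae_of_forall_ae_cond_fiber hX h_fiber] with ω hInter hA hB hω
  rw [hInter, hA, hB, hω]

/-- If `A, B, C` are pairwise disjoint subsets of `V` and, for every `x ∈ 𝒳`,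
the random vectors `Y_A` and `Y_B` are conditionally independent given `Y_C` under the
conditional measure `μ_x = μ(·|X = x)`, then under `μ` the vectors `Y_A` and `Y_B` are
conditionally independent given the pair `(Y_C, X)`. -/
theorem profile_condIndep_implies_condIndep_given_YC_X
    {Ω : Type*} [MeasurableSpace Ω] [StandardBorelSpace Ω] [Nonempty Ω]
    {V : Type*} [Fintype V]
    {𝒳 : Type*} [Fintype 𝒳] [Nonempty 𝒳] [MeasurableSpace 𝒳] [MeasurableSingletonClass 𝒳]
    {E : V → Type*} [∀ a, MeasurableSpace (E a)] [∀ a, StandardBorelSpace (E a)]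
    (Y : ∀ a, Ω → E a) (hY : ∀ a, Measurable (Y a))
    (X : Ω → 𝒳) (hX : Measurable X)
    (μ : Measure Ω) [IsProbabilityMeasure μ] (hXpos : ∀ x : 𝒳, μ (X ⁻¹' {x}) ≠ 0)
    (A B C : Set V) (hAB : Disjoint A B) (hAC : Disjoint A C) (hBC : Disjoint B C)
    (h : ∀ x : 𝒳,
      CondIndepFun (MeasurableSpace.comap (restr Y C) MeasurableSpace.pi)
        ((measurable_restr hY C).comap_le) (restr Y A) (restr Y B) (μ[|X ⁻¹' {x}])) :
    CondIndepFun
      (MeasurableSpace.comap (fun ω => (restr Y C ω, X ω)) inferInstance)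
      (((measurable_restr hY C).prodMk hX).comap_le)
      (restr Y A) (restr Y B) μ :=
  profile_condIndep_implies_condIndep_given_YC_X_general Y hY X hX μ A B C h
end

section
/- (Theorem 1) The probability measure μ satisfies the profile global Markov property (U-GMP) with respect to the profile undirected graph L if and only if μ satisfies the profile connected-set Markov property (U-CSMP) with respect to L. -/
/-!
Everything happens in a single graph `G = U(x)` under `μ_x`. If `C` separates `A` from `B`, no
component of `G[Cᶜ]` meets both `A` and `B`; grouping the conditionally mutually independent
components of `Cᶜ` into those that meet `A` and the rest gives `Y_A ⫫ Y_B | Y_C`. Conversely,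
for a component `K` of a disconnected `D`, the set `Dᶜ` separates `K` from `D \ K`, so each `Y_K`
is independent of the remaining components given `Y_{Dᶜ}`; these one-versus-rest independences
for every component amount to mutual independence.
-/

open MeasureTheory ProbabilityTheory

/-- `C` separates `A` from `B` in `G`. -/
def Separates {V : Type*} (G : SimpleGraph V) (A B C : Set V) : Prop :=
  ∀ a ∈ A, ∀ b ∈ B, ∀ p : G.Walk a b, ∃ c ∈ p.support, c ∈ C

/-- Vertex set of a connected component of the subgraph induced on `D`. -/
def componentSet {V : Type*} (G : SimpleGraph V) (D : Set V)
    (c : (G.induce D).ConnectedComponent) : Set V :=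
  Subtype.val '' {v : D | (G.induce D).connectedComponentMk v = c}

/-- The graph `U(x)` induced by a profile undirected graph `L`: distinct `a, b` are adjacent
iff `x ∉ L a b`. -/
def inducedGraph {V 𝒳 : Type*} (L : V → V → Set 𝒳) (hL : ∀ a b, L a b = L b a) (x : 𝒳) :
    SimpleGraph V where
  Adj a b := a ≠ b ∧ x ∉ L a b
  symm := ⟨fun a b ⟨h1, h2⟩ => ⟨h1.symm, by rwa [hL b a]⟩⟩
  loopless := ⟨fun _ h => h.1 rfl⟩

section MarkovProperties

variable {Ω : Type*} [MeasurableSpace Ω] [StandardBorelSpace Ω] [Nonempty Ω]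
  {V : Type*} [Fintype V]
  {𝒳 : Type*} [Fintype 𝒳] [Nonempty 𝒳] [MeasurableSpace 𝒳] [MeasurableSingletonClass 𝒳]
  {E : V → Type*} [∀ a, MeasurableSpace (E a)] [∀ a, StandardBorelSpace (E a)]

/-- Profile undirected Global Markov Property. -/
def UGMP (Y : ∀ a, Ω → E a) (hY : ∀ a, Measurable (Y a)) (X : Ω → 𝒳) (μ : Measure Ω)
    (L : V → V → Set 𝒳) (hL : ∀ a b, L a b = L b a) : Prop :=
  ∀ (x : 𝒳) (A B C : Set V), A.Nonempty → B.Nonempty →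
    Disjoint A B → Disjoint A C → Disjoint B C →
    Separates (inducedGraph L hL x) A B C →
    CondIndepFun (MeasurableSpace.comap (restr Y C) MeasurableSpace.pi)
      ((measurable_restr hY C).comap_le) (restr Y A) (restr Y B) (μ[|X ⁻¹' {x}])

/-- Profile undirected Connected Set Markov Property. -/
def UCSMP (Y : ∀ a, Ω → E a) (hY : ∀ a, Measurable (Y a)) (X : Ω → 𝒳) (μ : Measure Ω)
    (L : V → V → Set 𝒳) (hL : ∀ a b, L a b = L b a) : Prop :=
  ∀ (x : 𝒳) (D : Set V), D.Nonempty → ¬ ((inducedGraph L hL x).induce D).Connected →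
    iCondIndepFun (MeasurableSpace.comap (restr Y Dᶜ) MeasurableSpace.pi)
      ((measurable_restr hY Dᶜ).comap_le)
      (m := fun _ => MeasurableSpace.pi)
      (fun c : ((inducedGraph L hL x).induce D).ConnectedComponent =>
        restr Y (componentSet (inducedGraph L hL x) D c))
      (μ[|X ⁻¹' {x}])

end MarkovProperties

namespace ProbabilityTheory.Kernel

variable {α Ω ι : Type*} {mα : MeasurableSpace α} {mΩ : MeasurableSpace Ω}

theorem iIndep_of_indep_biSup_compl {κ : Kernel α Ω} [IsMarkovKernel κ] {μ : Measure α}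
    {m : ι → MeasurableSpace Ω} (h : ∀ i, Indep (m i) (⨆ j ∈ ({i}ᶜ : Set ι), m j) κ μ) :
    iIndep m κ μ := by
  classical
  intro s
  induction s using Finset.induction_on with
  | empty => intro f _; simp
  | @insert i s hi ih =>
    intro f hf
    have hrest : MeasurableSet[⨆ j ∈ ({i}ᶜ : Set ι), m j] (⋂ j ∈ s, f j) :=
      .biInter s.countable_toSet fun j hj =>
        le_biSup m (Set.mem_compl_singleton_iff.mpr (ne_of_mem_of_not_mem hj hi))
          _ (hf j (Finset.mem_insert_of_mem hj))
    filter_upwards [h i _ _ (hf i (Finset.mem_insert_self i s)) hrest,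
      ih fun j hj => hf j (Finset.mem_insert_of_mem hj)] with a hsplit hprod
    rw [Finset.set_biInter_insert, Finset.prod_insert hi, hsplit, hprod]

end ProbabilityTheory.Kernel

namespace SimpleGraph

variable {V : Type*} {G : SimpleGraph V} {D : Set V} {c c' : (G.induce D).ConnectedComponent}

lemma mem_componentSet_iff {v : V} :
    v ∈ componentSet G D c ↔ ∃ hv : v ∈ D, (G.induce D).connectedComponentMk ⟨v, hv⟩ = c :=
  ⟨fun ⟨w, hw, hwv⟩ => hwv ▸ ⟨w.2, hw⟩, fun ⟨hv, h⟩ => ⟨⟨v, hv⟩, h, rfl⟩⟩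

lemma mem_componentSet_connectedComponentMk {v : V} (hv : v ∈ D) :
    v ∈ componentSet G D ((G.induce D).connectedComponentMk ⟨v, hv⟩) :=
  ⟨⟨v, hv⟩, rfl, rfl⟩

lemma componentSet_subset : componentSet G D c ⊆ D := by
  rintro v ⟨w, _, rfl⟩
  exact w.2

lemma componentSet_nonempty : (componentSet G D c).Nonempty := by
  obtain ⟨w, rfl⟩ := c.exists_rep
  exact ⟨w, mem_componentSet_connectedComponentMk w.2⟩

lemma componentSet_subset_diff (h : c' ≠ c) : componentSet G D c' ⊆ D \ componentSet G D c :=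
  fun v hv => ⟨componentSet_subset hv, fun hv' => h <| by
    obtain ⟨_, rfl⟩ := mem_componentSet_iff.mp hv
    obtain ⟨_, rfl⟩ := mem_componentSet_iff.mp hv'
    rfl⟩

lemma mem_componentSet_of_walk {a b : V} (ha : a ∈ componentSet G D c) (p : G.Walk a b)
    (hp : ∀ w ∈ p.support, w ∈ D) : b ∈ componentSet G D c := by
  obtain ⟨_, rfl⟩ := mem_componentSet_iff.mp ha
  exact mem_componentSet_iff.mpr
    ⟨hp b p.end_mem_support, (ConnectedComponent.sound ⟨p.induce D hp⟩).symm⟩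

lemma reachable_induce_of_mem_componentSet {a b : V} (ha : a ∈ componentSet G D c)
    (hb : b ∈ componentSet G D c) :
    (G.induce D).Reachable ⟨a, componentSet_subset ha⟩ ⟨b, componentSet_subset hb⟩ := by
  obtain ⟨_, ha⟩ := mem_componentSet_iff.mp ha
  obtain ⟨_, hb⟩ := mem_componentSet_iff.mp hb
  exact ConnectedComponent.exact (ha.trans hb.symm)

lemma Separates.not_reachable_induce_compl {A B C : Set V} (hsep : Separates G A B C) {a b : V}
    (ha : a ∈ A) (hb : b ∈ B) (haC : a ∈ Cᶜ) (hbC : b ∈ Cᶜ) :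
    ¬ (G.induce Cᶜ).Reachable ⟨a, haC⟩ ⟨b, hbC⟩ := by
  rintro ⟨q⟩
  obtain ⟨w, hw, hwC⟩ := hsep a ha b hb (q.map (Embedding.induce Cᶜ).toHom)
  obtain ⟨w, -, rfl⟩ := List.mem_map.mp ((Walk.support_map _ q) ▸ hw)
  exact w.2 hwC

lemma separates_componentSet_diff :
    Separates G (componentSet G D c) (D \ componentSet G D c) Dᶜ := by
  intro a ha b hb p
  by_contra! hp
  exact hb.2 (mem_componentSet_of_walk ha p fun w hw => not_not.mp (hp w hw))

lemma diff_componentSet_nonempty (hD : D.Nonempty) (hconn : ¬ (G.induce D).Connected) :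
    (D \ componentSet G D c).Nonempty := by
  by_contra! hempty
  have : Nonempty D := hD.to_subtype
  refine hconn ⟨fun u v => ConnectedComponent.exact ?_⟩
  obtain ⟨_, hu⟩ := mem_componentSet_iff.mp (Set.sdiff_eq_empty.mp hempty u.2)
  obtain ⟨_, hv⟩ := mem_componentSet_iff.mp (Set.sdiff_eq_empty.mp hempty v.2)
  exact hu.trans hv.symm

end SimpleGraph

section Restrict

variable {Ω V : Type*} {E : V → Type*} [∀ a, MeasurableSpace (E a)]

lemma comap_restr_eq_iSup (Y : ∀ a, Ω → E a) (S : Set V) :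
    MeasurableSpace.comap (restr Y S) MeasurableSpace.pi
      = ⨆ a : S, MeasurableSpace.comap (Y a) inferInstance := by
  rw [MeasurableSpace.pi, MeasurableSpace.comap_iSup]
  exact iSup_congr fun a => MeasurableSpace.comap_comp

lemma comap_restr_le_biSup (Y : ∀ a, Ω → E a) {ι : Type*} {S : Set V} {T : ι → Set V}
    {I : Set ι} (h : S ⊆ ⋃ i ∈ I, T i) :
    MeasurableSpace.comap (restr Y S) MeasurableSpace.pi
      ≤ ⨆ i ∈ I, MeasurableSpace.comap (restr Y (T i)) MeasurableSpace.pi := by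
  rw [comap_restr_eq_iSup]
  refine iSup_le fun a => ?_
  obtain ⟨i, hi, ha⟩ := Set.mem_iUnion₂.mp (h a.2)
  refine le_trans ?_ (le_biSup (fun i => MeasurableSpace.comap (restr Y (T i)) _) hi)
  rw [comap_restr_eq_iSup]
  exact le_iSup_of_le (⟨a, ha⟩ : T i) le_rfl

lemma comap_restr_mono (Y : ∀ a, Ω → E a) {S T : Set V} (h : S ⊆ T) :
    MeasurableSpace.comap (restr Y S) MeasurableSpace.pi
      ≤ MeasurableSpace.comap (restr Y T) MeasurableSpace.pi := by
  rw [comap_restr_eq_iSup, comap_restr_eq_iSup]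
  exact iSup_le fun a => le_iSup_of_le (⟨a, h a.2⟩ : T) le_rfl

end Restrict

section MarkovPropertiesOfGraph

variable {Ω : Type*} [MeasurableSpace Ω] [StandardBorelSpace Ω] {V : Type*} {E : V → Type*}
  [∀ a, MeasurableSpace (E a)] {Y : ∀ a, Ω → E a}

open SimpleGraph

def IsGlobalMarkov (hY : ∀ a, Measurable (Y a)) (G : SimpleGraph V) (ν : Measure Ω)
    [IsFiniteMeasure ν] : Prop :=
  ∀ A B C : Set V, A.Nonempty → B.Nonempty → Disjoint A B → Disjoint A C → Disjoint B C →
    Separates G A B C →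
    CondIndepFun (MeasurableSpace.comap (restr Y C) MeasurableSpace.pi)
      ((measurable_restr hY C).comap_le) (restr Y A) (restr Y B) ν

def IsConnectedSetMarkov (hY : ∀ a, Measurable (Y a)) (G : SimpleGraph V) (ν : Measure Ω)
    [IsFiniteMeasure ν] : Prop :=
  ∀ D : Set V, D.Nonempty → ¬ (G.induce D).Connected →
    iCondIndepFun (MeasurableSpace.comap (restr Y Dᶜ) MeasurableSpace.pi)
      ((measurable_restr hY Dᶜ).comap_le) (m := fun _ => MeasurableSpace.pi)
      (fun c : (G.induce D).ConnectedComponent => restr Y (componentSet G D c)) ν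

variable {hY : ∀ a, Measurable (Y a)} {G : SimpleGraph V} {ν : Measure Ω} [IsFiniteMeasure ν]

theorem IsGlobalMarkov.isConnectedSetMarkov (h : IsGlobalMarkov hY G ν) :
    IsConnectedSetMarkov hY G ν := by
  intro D hD hconn
  rw [iCondIndepFun_iff_iCondIndep]
  refine Kernel.iIndep_of_indep_biSup_compl fun c => ?_
  have hsep := h (componentSet G D c) _ Dᶜ componentSet_nonempty
    (diff_componentSet_nonempty hD hconn) Set.disjoint_sdiff_right
    (disjoint_compl_right.mono_left componentSet_subset)
    (disjoint_compl_right.mono_left Set.sdiff_subset) separates_componentSet_diff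
  rw [condIndepFun_iff_condIndep] at hsep
  exact condIndep_of_condIndep_of_le_right hsep
    (iSup₂_le fun c' hc' => comap_restr_mono Y (componentSet_subset_diff hc'))

theorem IsConnectedSetMarkov.isGlobalMarkov (h : IsConnectedSetMarkov hY G ν) :
    IsGlobalMarkov hY G ν := by
  intro A B C hA hB _ hAC hBC hsep
  have hAC' : A ⊆ Cᶜ := hAC.subset_compl_right
  have hBC' : B ⊆ Cᶜ := hBC.subset_compl_right
  have hdisc : ¬ (G.induce Cᶜ).Connected := fun hconn =>
    hsep.not_reachable_induce_compl hA.some_mem hB.some_mem (hAC' hA.some_mem)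
      (hBC' hB.some_mem) (hconn.preconnected _ _)
  have hind := h Cᶜ (hA.mono hAC') hdisc
  rw [iCondIndepFun_iff_iCondIndep] at hind
  -- `hind` conditions on `Y_{Cᶜᶜ}`
  rw [← compl_compl C, condIndepFun_iff_condIndep]
  set S := {c | (componentSet G Cᶜ c ∩ A).Nonempty}
  have hgrouped := condIndep_iSup_of_disjoint (fun c => (measurable_restr hY _).comap_le) hind
    (disjoint_compl_right (a := S))
  have hAS : A ⊆ ⋃ c ∈ S, componentSet G Cᶜ c := fun a ha =>
    have haK := mem_componentSet_connectedComponentMk (hAC' ha)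
    Set.mem_biUnion ⟨a, haK, ha⟩ haK
  have hBS : B ⊆ ⋃ c ∈ Sᶜ, componentSet G Cᶜ c := fun b hb =>
    have hbK := mem_componentSet_connectedComponentMk (hBC' hb)
    Set.mem_biUnion (fun ⟨a, haK, ha⟩ => hsep.not_reachable_induce_compl ha hb _ _
      (reachable_induce_of_mem_componentSet haK hbK)) hbK
  exact condIndep_of_condIndep_of_le_right
    (condIndep_of_condIndep_of_le_left hgrouped (comap_restr_le_biSup Y hAS))
    (comap_restr_le_biSup Y hBS)

theorem isGlobalMarkov_iff_isConnectedSetMarkov :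
    IsGlobalMarkov hY G ν ↔ IsConnectedSetMarkov hY G ν :=
  ⟨IsGlobalMarkov.isConnectedSetMarkov, IsConnectedSetMarkov.isGlobalMarkov⟩

end MarkovPropertiesOfGraph

theorem UGMP_iff_UCSMP_general
    {Ω : Type*} [MeasurableSpace Ω] [StandardBorelSpace Ω]
    {V : Type*}
    {𝒳 : Type*}
    {E : V → Type*} [∀ a, MeasurableSpace (E a)]
    (Y : ∀ a, Ω → E a) (hY : ∀ a, Measurable (Y a))
    (X : Ω → 𝒳)
    (μ : Measure Ω)
    (L : V → V → Set 𝒳) (hL : ∀ a b, L a b = L b a) :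
    UGMP Y hY X μ L hL ↔ UCSMP Y hY X μ L hL :=
  forall_congr' fun _ => isGlobalMarkov_iff_isConnectedSetMarkov (hY := hY)

/-- **Theorem 1.** `μ` satisfies the profile global Markov property (U-GMP)
with respect to the profile undirected graph `L` if and only if it satisfies the profile
connected-set Markov property (U-CSMP) with respect to `L`. -/
theorem UGMP_iff_UCSMP
    {Ω : Type*} [MeasurableSpace Ω] [StandardBorelSpace Ω] [Nonempty Ω]
    {V : Type*} [Fintype V]
    {𝒳 : Type*} [Fintype 𝒳] [Nonempty 𝒳] [MeasurableSpace 𝒳] [MeasurableSingletonClass 𝒳]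
    {E : V → Type*} [∀ a, MeasurableSpace (E a)] [∀ a, StandardBorelSpace (E a)]
    (Y : ∀ a, Ω → E a) (hY : ∀ a, Measurable (Y a))
    (X : Ω → 𝒳) (hX : Measurable X)
    (μ : Measure Ω) [IsProbabilityMeasure μ] (hXpos : ∀ x : 𝒳, μ (X ⁻¹' {x}) ≠ 0)
    (L : V → V → Set 𝒳) (hL : ∀ a b, L a b = L b a) :
    UGMP Y hY X μ L hL ↔ UCSMP Y hY X μ L hL :=
  UGMP_iff_UCSMP_general Y hY X μ L hL
end

section
/- (Proposition 2) If μ satisfies the profile connected-set Markov property (U-CSMP) with respect to the profile undirected graph L, then for every x ∈ 𝒳 the conditional measure μ_x = μ(· | X = x) satisfies the global Markov property with respect to the induced simple graph U(x): for all pairwise disjoint A, B, C ⊆ V with A, B nonempty such that C separates A from B in U(x), the random vectors Y_A and Y_B are conditionally independent given Y_C under μ_x. -/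
open MeasureTheory ProbabilityTheory

/-! Apply U-CSMP to `D = V ∖ C`. Since `C` separates `A` from `B`, no connected component of
`U(x)` restricted to `D` meets both `A` and `B`, so `D` is disconnected and the components meeting
`A` form a group disjoint from the components meeting `B`. Conditionally on `Y_C` the two groups
are independent, and `Y_A`, `Y_B` are coordinate projections of them. -/

open SimpleGraph

section Restriction

variable {Ω V ι : Type*} {E : V → Type*} [∀ a, MeasurableSpace (E a)]
  {m mΩ : MeasurableSpace Ω} [StandardBorelSpace Ω] {hm : m ≤ mΩ}
  {μ : Measure Ω} [IsFiniteMeasure μ] {Y : ∀ a, Ω → E a}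

lemma condIndepFun_restr_of_iCondIndepFun (hY : ∀ a, Measurable (Y a)) {K : ι → Set V}
    (hK : iCondIndepFun m hm (fun i => restr Y (K i)) μ) {S T : Finset ι} (hST : Disjoint S T)
    {A B : Set V} (hA : ∀ a ∈ A, ∃ i ∈ S, a ∈ K i) (hB : ∀ b ∈ B, ∃ i ∈ T, b ∈ K i) :
    CondIndepFun m hm (restr Y A) (restr Y B) μ := by
  choose iA hiA haK using hA
  choose iB hiB hbK using hB
  have hblocks := hK.condIndepFun_finset S T hST fun i => measurable_restr hY (K i)
  exact hblocks.comp
    (φ := fun f (a : A) => f ⟨iA a a.2, hiA a a.2⟩ ⟨a, haK a a.2⟩)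
    (ψ := fun f (b : B) => f ⟨iB b b.2, hiB b b.2⟩ ⟨b, hbK b b.2⟩)
    (measurable_pi_lambda _ fun _ => (measurable_pi_apply _).comp (measurable_pi_apply _))
    (measurable_pi_lambda _ fun _ => (measurable_pi_apply _).comp (measurable_pi_apply _))

end Restriction

lemma mem_componentSet_connectedComponentMk {V : Type*} (G : SimpleGraph V) {D : Set V}
    (v : D) : v.1 ∈ componentSet G D ((G.induce D).connectedComponentMk v) :=
  ⟨v, rfl, rfl⟩

lemma Separates.not_reachable_induce_compl {V : Type*} {G : SimpleGraph V} {A B D : Set V}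
    (hsep : Separates G A B Dᶜ) {a b : V} (ha : a ∈ A) (hb : b ∈ B) (haD : a ∈ D)
    (hbD : b ∈ D) : ¬ (G.induce D).Reachable ⟨a, haD⟩ ⟨b, hbD⟩ := by
  rintro ⟨p⟩
  obtain ⟨c, hc, hcD⟩ := hsep a ha b hb (p.map (Embedding.induce D).toHom)
  replace hc : c ∈ (p.map (Embedding.induce D).toHom).support := hc
  rw [Walk.support_map, List.mem_map] at hc
  obtain ⟨c, -, rfl⟩ := hc
  exact hcD c.2

theorem UCSMP_implies_profile_GMP_general
    {Ω : Type*} [MeasurableSpace Ω] [StandardBorelSpace Ω] [Nonempty Ω]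
    {V : Type*} [Fintype V]
    {𝒳 : Type*} [Fintype 𝒳] [Nonempty 𝒳] [MeasurableSpace 𝒳] [MeasurableSingletonClass 𝒳]
    {E : V → Type*} [∀ a, MeasurableSpace (E a)] [∀ a, StandardBorelSpace (E a)]
    (Y : ∀ a, Ω → E a) (hY : ∀ a, Measurable (Y a))
    (X : Ω → 𝒳)
    (μ : Measure Ω)
    (L : V → V → Set 𝒳) (hL : ∀ a b, L a b = L b a)
    (h : UCSMP Y hY X μ L hL) :
    ∀ (x : 𝒳) (A B C : Set V), A.Nonempty → B.Nonempty →
      Disjoint A B → Disjoint A C → Disjoint B C →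
      Separates (inducedGraph L hL x) A B C →
      CondIndepFun (MeasurableSpace.comap (restr Y C) MeasurableSpace.pi)
        ((measurable_restr hY C).comap_le) (restr Y A) (restr Y B) (μ[|X ⁻¹' {x}]) := by
  intro x A B C ⟨a₀, ha₀⟩ ⟨b₀, hb₀⟩ _ hAC hBC hsep
  obtain ⟨D, rfl⟩ : ∃ D, C = Dᶜ := ⟨Cᶜ, (compl_compl C).symm⟩
  set G := inducedGraph L hL x
  have hAD : A ⊆ D := Set.disjoint_compl_right_iff_subset.1 hAC
  have hBD : B ⊆ D := Set.disjoint_compl_right_iff_subset.1 hBC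
  have hdisconn : ¬ (G.induce D).Connected := fun hconn =>
    hsep.not_reachable_induce_compl ha₀ hb₀ (hAD ha₀) (hBD hb₀) (hconn.preconnected _ _)
  let s : Set (G.induce D).ConnectedComponent :=
    (G.induce D).connectedComponentMk '' {v | v.1 ∈ A}
  refine condIndepFun_restr_of_iCondIndepFun hY (h x D ⟨a₀, hAD ha₀⟩ hdisconn)
    (S := (Set.toFinite s).toFinset) (T := (Set.toFinite sᶜ).toFinset)
    (Set.Finite.disjoint_toFinset.2 disjoint_compl_right) ?_ ?_
  · intro a ha
    exact ⟨_, (Set.toFinite s).mem_toFinset.2 ⟨⟨a, hAD ha⟩, ha, rfl⟩,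
      mem_componentSet_connectedComponentMk G ⟨a, hAD ha⟩⟩
  · intro b hb
    refine ⟨_, (Set.toFinite sᶜ).mem_toFinset.2 ?_,
      mem_componentSet_connectedComponentMk G ⟨b, hBD hb⟩⟩
    rintro ⟨⟨a, haD⟩, ha, hab⟩
    exact hsep.not_reachable_induce_compl ha hb _ _ (ConnectedComponent.exact hab)

/-- **Proposition 2.** If `μ` satisfies the profile connected-set Markov
property (U-CSMP) with respect to the profile undirected graph `L`, then for every `x ∈ 𝒳`
the conditional measure `μ_x = μ(·|X = x)` satisfies the global Markov property with respect
to the induced graph `U(x)`. -/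
theorem UCSMP_implies_profile_GMP
    {Ω : Type*} [MeasurableSpace Ω] [StandardBorelSpace Ω] [Nonempty Ω]
    {V : Type*} [Fintype V]
    {𝒳 : Type*} [Fintype 𝒳] [Nonempty 𝒳] [MeasurableSpace 𝒳] [MeasurableSingletonClass 𝒳]
    {E : V → Type*} [∀ a, MeasurableSpace (E a)] [∀ a, StandardBorelSpace (E a)]
    (Y : ∀ a, Ω → E a) (hY : ∀ a, Measurable (Y a))
    (X : Ω → 𝒳) (hX : Measurable X)
    (μ : Measure Ω) [IsProbabilityMeasure μ] (hXpos : ∀ x : 𝒳, μ (X ⁻¹' {x}) ≠ 0)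
    (L : V → V → Set 𝒳) (hL : ∀ a b, L a b = L b a)
    (h : UCSMP Y hY X μ L hL) :
    ∀ (x : 𝒳) (A B C : Set V), A.Nonempty → B.Nonempty →
      Disjoint A B → Disjoint A C → Disjoint B C →
      Separates (inducedGraph L hL x) A B C →
      CondIndepFun (MeasurableSpace.comap (restr Y C) MeasurableSpace.pi)
        ((measurable_restr hY C).comap_le) (restr Y A) (restr Y B) (μ[|X ⁻¹' {x}]) :=
  UCSMP_implies_profile_GMP_general Y hY X μ L hL h
end
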